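/- Suppose F is strictly convex. Let Θ be a nonempty, closed, strictly convex subset of X and let S ⊆ X be convex, and assume the projection Π_F(x; Θ) is nonempty for every x ∈ S. Then the function g(x) := T_F(x; Θ) is convex on S and is not constant on any segment [a,b] ⊆ S with a ≠ b and [a,b] ∩ Θ = ∅. -/
import Mathlib


open Set Pointwise Filter Topology Bornology Function

variable {X : Type*} [NormedAddCommGroup X] [NormedSpace ℝ X]

/-- The Minkowski gauge of `F`: `ρ_F(x) = inf {t ≥ 0 : x ∈ t • F}`. -/
noncomputable def rhoF (F : Set X) (x : X) : ℝ :=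
  sInf {t : ℝ | 0 ≤ t ∧ x ∈ t • F}

/-- The maximal time function `C_F(x; Q) = sup {ρ_F(q - x) : q ∈ Q}`. -/
noncomputable def maxTime (F Q : Set X) (x : X) : ℝ :=
  sSup ((fun q => rhoF F (q - x)) '' Q)

/-- The minimal time function `T_F(x; Θ) = inf {ρ_F(q - x) : q ∈ Θ}`. -/
noncomputable def minTime (F Θ : Set X) (x : X) : ℝ :=
  sInf ((fun q => rhoF F (q - x)) '' Θ)

/-- The projection `Π_F(x; Θ) = {u ∈ Θ : ρ_F(u - x) = T_F(x; Θ)}`. -/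
def nearProj (F Θ : Set X) (x : X) : Set X :=
  {u ∈ Θ | rhoF F (u - x) = minTime F Θ x}

lemma rhoF_eq_gauge {F : Set X} (h : F.Nonempty) : rhoF F = gauge F := by
  funext x
  rcases eq_or_ne x 0 with rfl | hx
  · rw [gauge_zero]
    refine le_antisymm (csInf_le ⟨0, fun t ht => ht.1⟩ ⟨le_refl 0, ?_⟩)
      (le_csInf ⟨0, le_refl 0, ?_⟩ fun t ht => ht.1)
    · rw [zero_smul_set h]; simp
    · rw [zero_smul_set h]; simp
  · unfold rhoF gauge
    congr 1
    ext t
    simp only [mem_setOf_eq]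
    constructor
    · rintro ⟨ht, hm⟩
      refine ⟨ht.lt_of_ne' fun h0 => hx ?_, hm⟩
      subst h0
      rw [zero_smul_set h] at hm
      simpa using hm
    · rintro ⟨ht, hm⟩
      exact ⟨ht.le, hm⟩

lemma minTime_le {F Θ : Set X} (hF : F.Nonempty) {q : X} (hq : q ∈ Θ) (x : X) :
    minTime F Θ x ≤ rhoF F (q - x) := by
  refine csInf_le ⟨0, ?_⟩ ⟨q, hq, rfl⟩
  rintro r ⟨p, _, rfl⟩
  rw [rhoF_eq_gauge hF]
  exact gauge_nonneg _

lemma minTime_nonneg {F Θ : Set X} (hF : F.Nonempty) (hΘ : Θ.Nonempty) (x : X) :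
    0 ≤ minTime F Θ x := by
  refine le_csInf (hΘ.image _) ?_
  rintro r ⟨p, _, rfl⟩
  rw [rhoF_eq_gauge hF]
  exact gauge_nonneg _

/-- Proposition 3.3. -/
theorem stmt8 (F Θ S : Set X)
    (hFc : IsClosed F) (hFb : IsBounded F) (hFconv : Convex ℝ F)
    (hF0 : (0 : X) ∈ interior F) (hFs : StrictConvex ℝ F)
    (hΘne : Θ.Nonempty) (hΘc : IsClosed Θ) (hΘs : StrictConvex ℝ Θ)
    (hS : Convex ℝ S) (hproj : ∀ x ∈ S, (nearProj F Θ x).Nonempty) :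
    ConvexOn ℝ S (minTime F Θ) ∧
      ∀ a b : X, a ≠ b → segment ℝ a b ⊆ S → segment ℝ a b ∩ Θ = ∅ →
        ¬ ∃ c : ℝ, ∀ x ∈ segment ℝ a b, minTime F Θ x = c := by
  have hFne : F.Nonempty := ⟨0, interior_subset hF0⟩
  have hFnhds : F ∈ 𝓝 (0 : X) := mem_interior_iff_mem_nhds.1 hF0
  have habs : Absorbent ℝ F := absorbent_nhds_zero hFnhds
  have hVb : Bornology.IsVonNBounded ℝ F := (NormedSpace.isVonNBounded_iff ℝ).2 hFb
  have hge : rhoF F = gauge F := rhoF_eq_gauge hFne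
  -- gauge is zero iff zero
  have hzero : ∀ x : X, gauge F x = 0 → x = 0 := fun x hx => (gauge_eq_zero habs hVb).1 hx
  -- subadditivity
  have hadd : ∀ x y : X, gauge F (x + y) ≤ gauge F x + gauge F y := gauge_add_le hFconv habs
  have hsmul : ∀ (t : ℝ), 0 ≤ t → ∀ x : X, gauge F (t • x) = t * gauge F x := by
    intro t ht x
    rw [gauge_smul_of_nonneg ht, smul_eq_mul]
  -- strict convexity of gauge at equal level
  have hstrict : ∀ (c : ℝ) (u v : X), 0 < c → gauge F u = c → gauge F v = c → u ≠ v →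
      gauge F ((1/2 : ℝ) • u + (1/2 : ℝ) • v) < c := by
    intro c u v hc hu hv huv
    have hclos : closure F = F := hFc.closure_eq
    have hmemu : c⁻¹ • u ∈ F := by
      rw [← hclos, ← gauge_le_one_iff_mem_closure hFconv hFnhds, hsmul c⁻¹ (by positivity) u, hu]
      rw [inv_mul_cancel₀ hc.ne']
    have hmemv : c⁻¹ • v ∈ F := by
      rw [← hclos, ← gauge_le_one_iff_mem_closure hFconv hFnhds, hsmul c⁻¹ (by positivity) v, hv]
      rw [inv_mul_cancel₀ hc.ne']
    have hne : c⁻¹ • u ≠ c⁻¹ • v := fun h => huv (smul_right_injective X (by positivity) h)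
    have hint : (1/2 : ℝ) • (c⁻¹ • u) + (1/2 : ℝ) • (c⁻¹ • v) ∈ interior F :=
      hFs hmemu hmemv hne (by norm_num) (by norm_num) (by norm_num)
    have hlt : gauge F ((1/2 : ℝ) • (c⁻¹ • u) + (1/2 : ℝ) • (c⁻¹ • v)) < 1 :=
      interior_subset_gauge_lt_one F hint
    have heq : (1/2 : ℝ) • u + (1/2 : ℝ) • v
        = c • ((1/2 : ℝ) • (c⁻¹ • u) + (1/2 : ℝ) • (c⁻¹ • v)) := by
      match_scalars <;> field_simp
    rw [heq, hsmul c hc.le]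
    calc c * gauge F ((1/2 : ℝ) • (c⁻¹ • u) + (1/2 : ℝ) • (c⁻¹ • v)) < c * 1 :=
          (mul_lt_mul_iff_right₀ hc).2 hlt
      _ = c := mul_one c
  constructor
  · refine ⟨hS, fun x hx y hy s t hs ht hst => ?_⟩
    obtain ⟨u, hu, hru⟩ := hproj x hx
    obtain ⟨v, hv, hrv⟩ := hproj y hy
    have hmem : s • u + t • v ∈ Θ := hΘs.convex hu hv hs ht hst
    calc minTime F Θ (s • x + t • y) ≤ rhoF F ((s • u + t • v) - (s • x + t • y)) :=
          minTime_le hFne hmem _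
      _ = gauge F (s • (u - x) + t • (v - y)) := by
          rw [hge, show s • u + t • v - (s • x + t • y) = s • (u - x) + t • (v - y) by module]
      _ ≤ gauge F (s • (u - x)) + gauge F (t • (v - y)) := hadd _ _
      _ = s * gauge F (u - x) + t * gauge F (v - y) := by rw [hsmul s hs, hsmul t ht]
      _ = s • minTime F Θ x + t • minTime F Θ y := by
          rw [← hge, hru, hrv]; simp [smul_eq_mul]
  · rintro a b hab hseg hdisj ⟨c, hc⟩
    have ha : a ∈ segment ℝ a b := left_mem_segment ℝ a b
    have hb : b ∈ segment ℝ a b := right_mem_segment ℝ a b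
    set m : X := (1/2 : ℝ) • a + (1/2 : ℝ) • b with hm
    have hmseg : m ∈ segment ℝ a b := ⟨1/2, 1/2, by norm_num, by norm_num, by norm_num, rfl⟩
    obtain ⟨u, hu, hru⟩ := hproj a (hseg ha)
    obtain ⟨v, hv, hrv⟩ := hproj b (hseg hb)
    have hua : gauge F (u - a) = c := by rw [← hge, hru, hc a ha]
    have hvb : gauge F (v - b) = c := by rw [← hge, hrv, hc b hb]
    have hcpos : 0 < c := by
      rcases lt_or_eq_of_le ((hc a ha) ▸ minTime_nonneg hFne hΘne a) with h | h
      · exact h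
      · exfalso
        have : u - a = 0 := hzero _ (by rw [hua, ← h])
        have : a ∈ Θ := by rwa [sub_eq_zero.1 this] at hu
        exact absurd (Set.eq_empty_iff_forall_notMem.1 hdisj a ⟨ha, this⟩) (fun h => h)
    set w : X := (1/2 : ℝ) • u + (1/2 : ℝ) • v with hw
    have hwΘ : w ∈ Θ := hΘs.convex hu hv (by norm_num) (by norm_num) (by norm_num)
    have hwm : w - m = (1/2 : ℝ) • (u - a) + (1/2 : ℝ) • (v - b) := by
      rw [hw, hm]; module
    have hTm : minTime F Θ m = c := hc m hmseg
    by_cases hcase : u - a = v - b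
    · -- u ≠ v, so w ∈ interior Θ; move w toward m to contradict minimality
      have huv : u ≠ v := by
        intro h
        apply hab
        have : u - a = u - b := by rw [hcase, h]
        have := sub_right_injective this
        exact this.symm ▸ rfl
      have hwint : w ∈ interior Θ :=
        hΘs hu hv huv (by norm_num : (0:ℝ) < 1/2) (by norm_num) (by norm_num)
      have hwmne : w - m ≠ 0 := by
        intro h
        have : gauge F (w - m) = 0 := by rw [h, gauge_zero]
        rw [hwm, hcase, ← smul_add, ← two_smul ℝ] at this
        rw [smul_smul] at this
        norm_num at this
        rw [hvb] at this
        exact hcpos.ne' this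
      obtain ⟨r, hr, hball⟩ := Metric.isOpen_iff.1 isOpen_interior w hwint
      have hnorm : 0 < ‖m - w‖ := by
        rw [norm_pos_iff]
        intro h
        exact hwmne (by rw [← neg_sub m w, h, neg_zero])
      set δ : ℝ := min (1/2 : ℝ) (r / (2 * ‖m - w‖)) with hδ
      have hδpos : 0 < δ := lt_min (by norm_num) (by positivity)
      have hδlt : δ < 1 := lt_of_le_of_lt (min_le_left _ _) (by norm_num)
      set w' : X := w + δ • (m - w) with hw'
      have hw'Θ : w' ∈ Θ := by
        apply interior_subset
        apply hball
        rw [Metric.mem_ball, dist_eq_norm]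
        have : w' - w = δ • (m - w) := by rw [hw']; abel
        rw [this, norm_smul, Real.norm_eq_abs, abs_of_pos hδpos]
        calc δ * ‖m - w‖ ≤ r / (2 * ‖m - w‖) * ‖m - w‖ :=
              mul_le_mul_of_nonneg_right (min_le_right _ _) (norm_nonneg _)
          _ = r / 2 := by field_simp
          _ < r := by linarith
      have hkey : gauge F (w' - m) = (1 - δ) * c := by
        have : w' - m = (1 - δ) • (w - m) := by rw [hw']; module
        rw [this, hsmul (1 - δ) (by linarith)]
        congr 1
        rw [hwm, hcase, ← smul_add, ← two_smul ℝ, smul_smul]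
        norm_num
        exact hvb
      have hle : minTime F Θ m ≤ gauge F (w' - m) := by
        rw [← hge]; exact minTime_le hFne hw'Θ m
      rw [hTm, hkey] at hle
      nlinarith
    · -- strict convexity of gauge gives a strictly better point
      have hlt : gauge F (w - m) < c := by
        rw [hwm]
        exact hstrict c (u - a) (v - b) hcpos hua hvb hcase
      have hle : minTime F Θ m ≤ gauge F (w - m) := by
        rw [← hge]; exact minTime_le hFne hwΘ m
      rw [hTm] at hle
      exact absurd hle (not_le.2 hlt)
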